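/- Let G and H be finite simple graphs such that: (a) G admits a graph automorphism η with η(v) adjacent to v for every vertex v, and every orbit of η on the vertex set of G has even length; (b) H is bipartite and every vertex of H has even degree. Then the Cartesian product satisfies αod(G □ H) ≥ |V(H)| · αod(G). -/

import Mathlib

open Finset

section OddIndepDefs

variable {V : Type*} [Fintype V] [DecidableEq V]

/-- `S` is an odd independent set in `G`: `S` is independent and every vertex outside `S`
has either no neighbor in `S` or an odd number of neighbors in `S`. -/
def IsOddIndepSet (G : SimpleGraph V) [DecidableRel G.Adj] (S : Finset V) : Prop :=
  (∀ u ∈ S, ∀ v ∈ S, ¬ G.Adj u v) ∧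
  ∀ v ∉ S, (S.filter fun u => G.Adj v u) = ∅ ∨ Odd (S.filter fun u => G.Adj v u).card

/-- The odd independence number: the largest size of an odd independent set. -/
noncomputable def oddIndepNum (G : SimpleGraph V) [DecidableRel G.Adj] : ℕ :=
  sSup {k | ∃ S : Finset V, IsOddIndepSet G S ∧ S.card = k}

/-- The independence number: the largest size of an independent set. -/
noncomputable def indepNum (G : SimpleGraph V) : ℕ :=
  sSup {k | ∃ S : Finset V, (∀ u ∈ S, ∀ v ∈ S, ¬ G.Adj u v) ∧ S.card = k}

/-- A strong odd coloring with `n` colors: a proper coloring such that for every vertex `v`,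
every color appearing in the open neighborhood of `v` appears there an odd number of times. -/
def IsStrongOddColoring (G : SimpleGraph V) [DecidableRel G.Adj] {n : ℕ} (c : V → Fin n) : Prop :=
  (∀ u v, G.Adj u v → c u ≠ c v) ∧
  ∀ v : V, ∀ k : Fin n,
    (univ.filter fun u => G.Adj v u ∧ c u = k) = ∅ ∨
    Odd (univ.filter fun u => G.Adj v u ∧ c u = k).card

/-- The strong odd chromatic number: minimum number of colors of a strong odd coloring. -/
noncomputable def strongOddChromNum (G : SimpleGraph V) [DecidableRel G.Adj] : ℕ :=
  sInf {n | ∃ c : V → Fin n, IsStrongOddColoring G c}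

/-- The chromatic number, as a natural number. -/
noncomputable def chromNum (G : SimpleGraph V) : ℕ :=
  sInf {n | ∃ c : V → Fin n, ∀ u v, G.Adj u v → c u ≠ c v}

/-- The square of a graph: two distinct vertices are adjacent iff they are at distance at most 2,
i.e. adjacent or having a common neighbor. -/
def graphSquare (G : SimpleGraph V) : SimpleGraph V where
  Adj u v := u ≠ v ∧ (G.Adj u v ∨ ∃ w, G.Adj u w ∧ G.Adj w v)
  symm := by
    constructor
    intro u v h
    refine ⟨h.1.symm, ?_⟩
    rcases h.2 with h' | ⟨w, h1, h2⟩
    · exact Or.inl h'.symm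
    · exact Or.inr ⟨w, h2.symm, h1.symm⟩
  loopless := ⟨fun v h => h.1 rfl⟩

instance (G : SimpleGraph V) [DecidableRel G.Adj] : DecidableRel (graphSquare G).Adj :=
  fun u v => inferInstanceAs (Decidable (u ≠ v ∧ (G.Adj u v ∨ ∃ w, G.Adj u w ∧ G.Adj w v)))

end OddIndepDefs


instance boxProdDecidableRel
    {α β : Type*} [DecidableEq α] [DecidableEq β]
    (G : SimpleGraph α) (H : SimpleGraph β)
    [DecidableRel G.Adj] [DecidableRel H.Adj] :
    DecidableRel (G.boxProd H).Adj := fun x y =>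
  inferInstanceAs (Decidable (G.Adj x.1 y.1 ∧ x.2 = y.2 ∨ H.Adj x.2 y.2 ∧ x.1 = y.1))

/-! Take a maximum odd independent set `S` of `G` and a bipartition `A ∪ B` of `H`; then
`S × A ∪ η(S) × B` is odd independent in `G □ H`. A vertex `(v, w)` outside it has, inside its
copy of `G`, as many neighbours as `v` has in `S` or in `η(S)`, an odd number or zero; inside its
copy of `H` it has either none or all `deg w` of its neighbours, an even number. The second count
can only be nonzero when `v` lies in the other set, and since `η` moves every vertex to a
neighbour, every vertex of `η(S)` has a neighbour in `S` and vice versa, so the first count is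
then odd. -/

open SimpleGraph

section OddIndepSet

variable {V V' : Type*} {G : SimpleGraph V} [DecidableRel G.Adj] {S : Finset V}

theorem IsOddIndepSet.map {G' : SimpleGraph V'} [DecidableRel G'.Adj] (hS : IsOddIndepSet G S)
    (e : G ≃g G') : IsOddIndepSet G' (S.map e.toEquiv.toEmbedding) := by
  refine ⟨?_, fun v hv => ?_⟩
  · simp only [mem_map, Equiv.coe_toEmbedding, RelIso.coe_fn_toEquiv]
    rintro _ ⟨a, ha, rfl⟩ _ ⟨b, hb, rfl⟩
    rw [e.map_adj_iff]
    exact hS.1 a ha b hb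
  have hv' : e.symm v ∉ S := fun h => hv (mem_map.2 ⟨_, h, e.apply_symm_apply v⟩)
  have hfilter : (S.map e.toEquiv.toEmbedding).filter (G'.Adj v) =
      (S.filter (G.Adj (e.symm v))).map e.toEquiv.toEmbedding := by
    ext x
    simp only [mem_filter, mem_map, Equiv.coe_toEmbedding, RelIso.coe_fn_toEquiv]
    constructor
    · rintro ⟨⟨u, hu, rfl⟩, h⟩
      exact ⟨u, ⟨hu, by rwa [← e.map_adj_iff, e.apply_symm_apply]⟩, rfl⟩
    · rintro ⟨u, ⟨hu, h⟩, rfl⟩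
      exact ⟨⟨u, hu, rfl⟩, by rwa [← e.map_adj_iff, e.apply_symm_apply] at h⟩
  rw [hfilter, map_eq_empty, card_map]
  exact hS.2 _ hv'

variable [Fintype V]

theorem bddAbove_card_isOddIndepSet (G : SimpleGraph V) [DecidableRel G.Adj] :
    BddAbove {k | ∃ S : Finset V, IsOddIndepSet G S ∧ S.card = k} :=
  ⟨Fintype.card V, by rintro _ ⟨S, -, rfl⟩; exact card_le_univ S⟩

theorem IsOddIndepSet.card_le_oddIndepNum (hS : IsOddIndepSet G S) : S.card ≤ oddIndepNum G :=
  le_csSup (bddAbove_card_isOddIndepSet G) ⟨S, hS, rfl⟩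

theorem exists_isOddIndepSet_card_eq_oddIndepNum (G : SimpleGraph V) [DecidableRel G.Adj] :
    ∃ S : Finset V, IsOddIndepSet G S ∧ S.card = oddIndepNum G :=
  Nat.sSup_mem (s := {k | ∃ S : Finset V, IsOddIndepSet G S ∧ S.card = k})
    ⟨0, ∅, ⟨by simp, by simp⟩, rfl⟩ (bddAbove_card_isOddIndepSet G)

end OddIndepSet

theorem SimpleGraph.Coloring.even_card_filter_adj {W : Type*} [Fintype W] {H : SimpleGraph W}
    [DecidableRel H.Adj] (c : H.Coloring (Fin 2)) {w : W} (hw : Even (H.degree w))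
    (P : Fin 2 → Prop) [DecidablePred P] :
    Even (univ.filter fun w' => H.Adj w w' ∧ P (c w')).card := by
  by_cases h : ∃ w₀, H.Adj w w₀ ∧ P (c w₀)
  · obtain ⟨w₀, hw₀, hP⟩ := h
    have hsame : ∀ w', H.Adj w w' → c w' = c w₀ := fun w' hw' => by
      have h₁ := c.valid hw'; have h₂ := c.valid hw₀; omega
    have hfilter : (univ.filter fun w' => H.Adj w w' ∧ P (c w')) = H.neighborFinset w := by
      rw [neighborFinset_eq_filter]
      exact filter_congr fun w' _ => and_iff_left_of_imp fun hw' => hsame w' hw' ▸ hP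
    rwa [hfilter, card_neighborFinset_eq_degree]
  · rw [filter_false_of_mem fun w' _ hw' => h ⟨w', hw'⟩, card_empty]
    exact .zero

theorem card_filter_fst_mem {V W : Type*} [Fintype V] [DecidableEq V] [Fintype W]
    (f : W → Finset V) :
    (univ.filter fun p : V × W => p.1 ∈ f p.2).card = ∑ w, (f w).card := by
  rw [card_filter, Fintype.sum_prod_type_right]
  simp only [sum_boole, Nat.cast_id, filter_mem_eq_inter, univ_inter]

section BoxProd

variable {V W : Type*} [Fintype V] [DecidableEq V] [Fintype W] [DecidableEq W]
  {G : SimpleGraph V} [DecidableRel G.Adj] {H : SimpleGraph W} [DecidableRel H.Adj]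

theorem card_filter_boxProd_adj (T : Finset (V × W)) (v : V) (w : W) :
    (T.filter fun p => (G □ H).Adj (v, w) p).card =
      (univ.filter fun u => G.Adj v u ∧ (u, w) ∈ T).card +
        (univ.filter fun w' => H.Adj w w' ∧ (v, w') ∈ T).card := by
  have hsplit : (T.filter fun p => (G □ H).Adj (v, w) p) =
      ((univ.filter fun u => G.Adj v u ∧ (u, w) ∈ T).map (.sectL V w)).disjUnion
        ((univ.filter fun w' => H.Adj w w' ∧ (v, w') ∈ T).map (.sectR v W))
        (by
          simp only [Finset.disjoint_left, mem_map, mem_filter, Function.Embedding.sectL_apply,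
            Function.Embedding.sectR_apply]
          grind [SimpleGraph.irrefl]) := by
    ext ⟨u, w'⟩
    simp only [mem_filter, boxProd_adj, disjUnion_eq_union, mem_union, mem_map,
      Function.Embedding.sectL_apply, Function.Embedding.sectR_apply, Prod.mk.injEq, mem_univ,
      true_and]
    grind
  rw [hsplit, card_disjUnion, card_map, card_map]

theorem isOddIndepSet_boxProd_of_coloring {S : Fin 2 → Finset V} (hS : ∀ i, IsOddIndepSet G (S i))
    (hdom : ∀ i j, i ≠ j → ∀ v ∈ S i, ∃ u ∈ S j, G.Adj v u) (c : H.Coloring (Fin 2))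
    (hdeg : ∀ w, Even (H.degree w)) :
    IsOddIndepSet (G □ H) (univ.filter fun p : V × W => p.1 ∈ S (c p.2)) := by
  have hdisj : ∀ i j, i ≠ j → ∀ v ∈ S i, v ∉ S j := fun i j hij v hv hv' =>
    have ⟨u, hu, hvu⟩ := hdom i j hij v hv
    (hS j).1 v hv' u hu hvu
  refine ⟨?_, ?_⟩
  · rintro ⟨v, w⟩ hp ⟨v', w'⟩ hq hadj
    simp only [mem_filter, mem_univ, true_and] at hp hq
    rcases hadj with ⟨hG, rfl : w = w'⟩ | ⟨hH, rfl : v = v'⟩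
    · exact (hS _).1 v hp v' hq hG
    · exact hdisj _ _ (c.valid hH) v hp hq
  rintro ⟨v, w⟩ hp
  simp only [mem_filter, mem_univ, true_and] at hp
  rw [← card_eq_zero, card_filter_boxProd_adj]
  simp only [mem_filter, mem_univ, true_and]
  have hGpart : (univ.filter fun u => G.Adj v u ∧ u ∈ S (c w)) = (S (c w)).filter (G.Adj v) := by
    ext u; simp only [mem_filter, mem_univ, true_and]; exact and_comm
  have hHpart := c.even_card_filter_adj (hdeg w) (v ∈ S ·)
  rw [hGpart]
  rcases (hS (c w)).2 v hp with hempty | hodd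
  · have hHempty : (univ.filter fun w' => H.Adj w w' ∧ v ∈ S (c w')) = ∅ :=
      filter_false_of_mem fun w' _ ⟨hww', hv⟩ =>
        have ⟨u, hu, hvu⟩ := hdom _ _ (c.valid hww').symm v hv
        filter_eq_empty_iff.1 hempty hu hvu
    exact .inl (by rw [hempty, hHempty, card_empty, card_empty])
  · exact .inr (hodd.add_even hHpart)

end BoxProd

theorem oddIndepNum_boxProd_ge_of_automorphism_general
    {V W : Type*} [Fintype V] [DecidableEq V] [Fintype W] [DecidableEq W]
    (G : SimpleGraph V) [DecidableRel G.Adj]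
    (H : SimpleGraph W) [DecidableRel H.Adj]
    (η : G ≃g G) (hadj : ∀ v : V, G.Adj v (η v))
    (hbip : H.Colorable 2) (hdeg : ∀ w : W, Even (H.degree w)) :
    Fintype.card W * oddIndepNum G ≤ oddIndepNum (G.boxProd H) := by
  obtain ⟨S, hS, hcard⟩ := exists_isOddIndepSet_card_eq_oddIndepNum G
  let S' : Fin 2 → Finset V := ![S, S.map η.toEquiv.toEmbedding]
  have hS' : ∀ i, IsOddIndepSet G (S' i) := Fin.forall_fin_two.2 ⟨hS, hS.map η⟩
  have hcard' : ∀ i, (S' i).card = oddIndepNum G :=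
    Fin.forall_fin_two.2 ⟨hcard, by simp [S', hcard]⟩
  have hdom : ∀ i j, i ≠ j → ∀ v ∈ S' i, ∃ u ∈ S' j, G.Adj v u := by
    have hS_dom : ∀ v ∈ S, ∃ u ∈ S.map η.toEquiv.toEmbedding, G.Adj v u :=
      fun v hv => ⟨η v, mem_map_of_mem _ hv, hadj v⟩
    have hmap_dom : ∀ v ∈ S.map η.toEquiv.toEmbedding, ∃ u ∈ S, G.Adj v u := by
      simp only [mem_map, Equiv.coe_toEmbedding, RelIso.coe_fn_toEquiv]
      rintro _ ⟨u, hu, rfl⟩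
      exact ⟨u, hu, (hadj u).symm⟩
    simp only [Fin.forall_fin_two]
    exact ⟨⟨fun h => (h rfl).elim, fun _ => hS_dom⟩, fun _ => hmap_dom, fun h => (h rfl).elim⟩
  obtain ⟨c⟩ := hbip
  calc Fintype.card W * oddIndepNum G = ∑ w, (S' (c w)).card := by simp [hcard']
    _ = _ := (card_filter_fst_mem _).symm
    _ ≤ _ := (isOddIndepSet_boxProd_of_coloring hS' hdom c hdeg).card_le_oddIndepNum

/-- If `G` admits an automorphism `η` with `η v` adjacent to `v` for every `v`
whose orbits on `V(G)` all have even length, and `H` is bipartite with all degrees even, then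
`αod(G □ H) ≥ |V(H)| · αod(G)`. -/
theorem oddIndepNum_boxProd_ge_of_automorphism
    {V W : Type*} [Fintype V] [DecidableEq V] [Fintype W] [DecidableEq W]
    (G : SimpleGraph V) [DecidableRel G.Adj]
    (H : SimpleGraph W) [DecidableRel H.Adj]
    (η : G ≃g G) (hadj : ∀ v : V, G.Adj v (η v))
    (horb : ∀ v : V, Even (Set.ncard {w : V | ∃ k : ℕ, (η.toEquiv ^ k) v = w}))
    (hbip : H.Colorable 2) (hdeg : ∀ w : W, Even (H.degree w)) :
    Fintype.card W * oddIndepNum G ≤ oddIndepNum (G.boxProd H) :=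
  oddIndepNum_boxProd_ge_of_automorphism_general G H η hadj hbip hdeg
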